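/- Let d ≥ 1 and let W_d be the d×d matrix over the shuffle algebra T(ℝ^d) whose (i,j) entry is the two-letter word ij. Then det_⧢(W_d) = Σ_{σ∈S_d} sign(σ) Σ_{τ∈S_d} τ(1)σ(τ(1)) · τ(2)σ(τ(2)) ⋯ τ(d)σ(τ(d)), where each summand on the right is the word of length 2d obtained by concatenating the two-letter blocks τ(i)σ(τ(i)) for i = 1,…,d. -/

import Mathlib

open scoped BigOperators

namespace ShufflePaper

variable {α : Type*}

/-- All shuffles (interleavings) of two words, with multiplicity. -/
def shuffles : List α → List α → Multiset (List α)
  | [], ys => {ys}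
  | x :: xs, [] => {x :: xs}
  | x :: xs, y :: ys =>
      ((shuffles xs (y :: ys)).map (x :: ·)) + ((shuffles (x :: xs) ys).map (y :: ·))
  termination_by l₁ l₂ => l₁.length + l₂.length

/-- The element of the shuffle algebra corresponding to a multiset of words. -/
noncomputable def ofMS (m : Multiset (List α)) : List α →₀ ℝ :=
  (m.map fun l => Finsupp.single l (1 : ℝ)).sum

/-- The shuffle product on the shuffle algebra `T(ℝ^d)` (bilinear extension). -/
noncomputable def sh (x y : List α →₀ ℝ) : List α →₀ ℝ :=
  x.sum fun v a => y.sum fun w b => (a * b) • ofMS (shuffles v w)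

/-- Iterated shuffle product of a list of elements (empty word is the unit). -/
noncomputable def shProd : List (List α →₀ ℝ) → (List α →₀ ℝ)
  | [] => Finsupp.single [] 1
  | x :: xs => sh x (shProd xs)

/-- Determinant in the commutative ring `(T(ℝ^d), ⧢)` via the Leibniz formula. -/
noncomputable def detSh {n : ℕ} (M : Fin n → Fin n → (List α →₀ ℝ)) : List α →₀ ℝ :=
  ∑ σ : Equiv.Perm (Fin n), (Equiv.Perm.sign σ : ℤ) •
    shProd ((List.finRange n).map fun i => M (σ i) i)

/-- The matrix `W_d` whose `(i,j)` entry is the two-letter word `ij`. -/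
noncomputable def W (d : ℕ) : Fin d → Fin d → (List (Fin d) →₀ ℝ) :=
  fun i j => Finsupp.single [i, j] 1

/-- `inv(t_{1,d}) = Σ_σ sign(σ) σ(1)⋯σ(d)`. -/
noncomputable def invT1 (d : ℕ) : List (Fin d) →₀ ℝ :=
  ∑ σ : Equiv.Perm (Fin d), (Equiv.Perm.sign σ : ℤ) •
    Finsupp.single ((List.finRange d).map σ) 1

/-- `inv(t_{2,d}) = Σ_{σ,τ} sign(σ)sign(τ) σ(1)τ(1)⋯σ(d)τ(d)`. -/
noncomputable def invT2 (d : ℕ) : List (Fin d) →₀ ℝ :=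
  ∑ σ : Equiv.Perm (Fin d), ∑ τ : Equiv.Perm (Fin d),
    ((Equiv.Perm.sign σ : ℤ) * (Equiv.Perm.sign τ : ℤ)) •
      Finsupp.single ((List.finRange d).flatMap fun i => [σ i, τ i]) 1

/- Right half-shuffle of two words: `u ≻ (v·i) = (u ⧢ v)·i`; zero if the
second word is empty. -/
open Classical in
noncomputable def hsW (u w : List α) : List α →₀ ℝ :=
  if h : w = [] then 0
  else ofMS ((shuffles u w.dropLast).map fun l => l ++ [w.getLast h])

/-- Right half-shuffle product (bilinear extension). -/
noncomputable def hs (x y : List α →₀ ℝ) : List α →₀ ℝ :=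
  x.sum fun v a => y.sum fun w b => (a * b) • hsW v w

/-- Iterated right half-shuffle of a list of words, bracketed from the left. -/
noncomputable def hsList : List (List α) → (List α →₀ ℝ)
  | [] => 0
  | w :: ws => ws.foldl (fun acc u => hs acc (Finsupp.single u 1)) (Finsupp.single w 1)

/-- Action of `σ ∈ S_n` on the span of words, permuting letter positions of
words of length `n` (letter in position `σ(k)` of `σ·w` is `w_k`); words of
other lengths are left untouched. -/
noncomputable def permAct {d : ℕ} (n : ℕ) (σ : Equiv.Perm (Fin n))
    (x : List (Fin d) →₀ ℝ) : List (Fin d) →₀ ℝ :=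
  x.sum fun w a =>
    if h : w.length = n then
      Finsupp.single (List.ofFn fun p : Fin n => w.get (Fin.cast h.symm (σ⁻¹ p))) a
    else Finsupp.single w a

/-- The subgroup `H ≤ S_{2d}` generated by the transpositions `(2i−1, 2i+1)` and
`(2i, 2i+2)`, `1 ≤ i ≤ d−1` (0-indexed: all swaps `(k, k+2)` with `k+2 < 2d`). -/
def Hgrp (d : ℕ) : Subgroup (Equiv.Perm (Fin (2 * d))) :=
  Subgroup.closure
    {g | ∃ k : ℕ, ∃ hk : k + 2 < 2 * d, g = Equiv.swap ⟨k, by omega⟩ ⟨k + 2, hk⟩}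

/-- Pfaffian in the shuffle algebra, via the sum over permutations. -/
noncomputable def pfSh {n : ℕ} (A : Fin n → Fin n → (List α →₀ ℝ)) : List α →₀ ℝ :=
  ((2 ^ (n / 2) * (n / 2).factorial : ℝ))⁻¹ •
    ∑ π : Equiv.Perm (Fin n), (Equiv.Perm.sign π : ℤ) •
      shProd ((List.finRange (n / 2)).map fun i : Fin (n / 2) =>
        A (π ⟨2 * (i : ℕ), by have := i.isLt; omega⟩)
          (π ⟨2 * (i : ℕ) + 1, by have := i.isLt; omega⟩))

/-- The matrix `Z_d` from de Bruijn's formula, odd case. -/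
noncomputable def Z (d : ℕ) : Fin (d + 1) → Fin (d + 1) → (List (Fin d) →₀ ℝ) :=
  fun i j =>
    if hi : (i : ℕ) < d then
      if hj : (j : ℕ) < d then
        Finsupp.single [⟨i, hi⟩, ⟨j, hj⟩] 1 - Finsupp.single [⟨j, hj⟩, ⟨i, hi⟩] 1
      else Finsupp.single [⟨i, hi⟩] 1
    else if hj : (j : ℕ) < d then -Finsupp.single [⟨j, hj⟩] 1
    else 0

/-!
Encode the entry `σ(i) i` of `W_d` as the block `(i, false) (i, true)` of an opener and a closer,
read through `σ` at the opener. Shuffling commutes with relabelling letters, so every Leibniz term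
is the relabelled shuffle product of the `d` blocks, which is a multiplicity-free sum of
interleavings `w`; hence `det_⧢ W_d` is the sum over `w` of the antisymmetrization of `w` in its
opener letters. If `w` has two adjacent openers, swapping the first such pair gives another
interleaving whose antisymmetrization is the negative one, so these words cancel in pairs. The
remaining words are the concatenations of the blocks in an order `τ(1), …, τ(d)`; they give
`Σ_σ sign σ Σ_τ σ(τ(1)) τ(1) ⋯ σ(τ(d)) τ(d)`, and the substitution `(σ, τ) ↦ (σ⁻¹, σ τ)` turns this
into the stated sum.
-/

lemma ofMS_add (m n : Multiset (List α)) : ofMS (m + n) = ofMS m + ofMS n := by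
  simp [ofMS]

lemma ofMS_cons (w : List α) (m : Multiset (List α)) :
    ofMS (w ::ₘ m) = Finsupp.single w 1 + ofMS m := by
  simp [ofMS]

lemma ofMS_map {β : Type*} (f : β → List α) (m : Multiset β) :
    ofMS (m.map f) = (m.map fun w => Finsupp.single (f w) 1).sum := by
  simp [ofMS, Multiset.map_map]

lemma sh_single_left (v : List α) (y : List α →₀ ℝ) :
    sh (Finsupp.single v 1) y = y.sum fun w b => b • ofMS (shuffles v w) := by
  rw [sh, Finsupp.sum_single_index] <;> simp [Finsupp.sum]

lemma sh_single_ofMS (v : List α) (m : Multiset (List α)) :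
    sh (Finsupp.single v 1) (ofMS m) = ofMS (m.bind (shuffles v)) := by
  induction m using Multiset.induction_on with
  | empty => simp [sh_single_left, ofMS]
  | cons w m ih =>
    rw [Multiset.cons_bind, ofMS_add, ← ih, sh_single_left, sh_single_left, ofMS_cons,
      Finsupp.sum_add_index' (by simp) (by simp [add_smul]),
      Finsupp.sum_single_index (by rw [zero_smul]), one_smul]

def multiShuffles : List (List α) → Multiset (List α)
  | [] => {[]}
  | w :: ws => (multiShuffles ws).bind (shuffles w)

lemma shProd_map_single (L : List (List α)) :
    shProd (L.map fun w => Finsupp.single w 1) = ofMS (multiShuffles L) := by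
  induction L with
  | nil => simp [shProd, multiShuffles, ofMS]
  | cons w ws ih => simp [shProd, multiShuffles, ih, sh_single_ofMS]

lemma shuffles_nil_left (v : List α) : shuffles [] v = {v} := by
  rw [shuffles]

lemma shuffles_nil_right (v : List α) : shuffles v [] = {v} := by
  cases v <;> rw [shuffles]

lemma shuffles_map {β : Type*} (f : α → β) (u v : List α) :
    shuffles (u.map f) (v.map f) = (shuffles u v).map (List.map f) := by
  induction u, v using shuffles.induct with
  | case1 ys => simp [shuffles_nil_left]
  | case2 x xs => simp [shuffles_nil_right]
  | case3 x xs y ys ih₁ ih₂ =>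
    simp only [List.map_cons] at ih₁ ih₂ ⊢
    simp [shuffles, ih₁, ih₂, Multiset.map_map]

lemma multiShuffles_map {β : Type*} (f : α → β) (L : List (List α)) :
    multiShuffles (L.map (List.map f)) = (multiShuffles L).map (List.map f) := by
  induction L with
  | nil => simp [multiShuffles]
  | cons u L ih =>
    simp only [List.map_cons, multiShuffles, ih, Multiset.bind_map, Multiset.map_bind,
      shuffles_map]

lemma mem_shuffles_iff {u v w : List α} (huv : (u ++ v).Nodup) :
    w ∈ shuffles u v ↔ w.Perm (u ++ v) ∧ u.Sublist w ∧ v.Sublist w := by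
  induction u, v using shuffles.induct generalizing w with
  | case1 ys =>
    simp only [shuffles_nil_left, Multiset.mem_singleton, List.nil_append, List.nil_sublist,
      true_and]
    exact ⟨by rintro rfl; simp, fun ⟨hp, hs⟩ => (hs.eq_of_length hp.length_eq.symm).symm⟩
  | case2 x xs =>
    simp only [shuffles_nil_right, Multiset.mem_singleton, List.append_nil, List.nil_sublist,
      and_true]
    exact ⟨by rintro rfl; simp, fun ⟨hp, hs⟩ => (hs.eq_of_length hp.length_eq.symm).symm⟩
  | case3 x xs y ys ih₁ ih₂ =>
    have hxy : x ≠ y := by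
      rintro rfl
      simp at huv
    have h₁ : (xs ++ y :: ys).Nodup := huv.sublist ((List.sublist_cons_self x xs).append_right _)
    have h₂ : (x :: xs ++ ys).Nodup := huv.sublist ((List.sublist_cons_self y ys).append_left _)
    rw [shuffles, Multiset.mem_add, Multiset.mem_map, Multiset.mem_map]
    cases w with
    | nil => simp
    | cons c w =>
      simp only [List.cons.injEq, exists_eq_right_right, ih₁ h₁, ih₂ h₂]
      constructor
      · rintro (⟨⟨hp, hs, ht⟩, rfl⟩ | ⟨⟨hp, hs, ht⟩, rfl⟩)
        · exact ⟨hp.cons x, hs.cons_cons x, ht.cons x⟩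
        · exact ⟨(hp.cons y).trans List.perm_middle.symm, hs.cons y, ht.cons_cons y⟩
      · rintro ⟨hp, hs, ht⟩
        have hc : c ∉ w := (List.nodup_cons.mp (hp.nodup_iff.mpr huv)).1
        rcases List.sublist_cons_iff.mp hs with hs' | ⟨r, hr, hs'⟩ <;>
          rcases List.sublist_cons_iff.mp ht with ht' | ⟨r', hr', ht'⟩
        · exfalso
          rcases List.mem_append.mp (hp.subset List.mem_cons_self) with h | h
          exacts [hc (hs'.subset h), hc (ht'.subset h)]
        · obtain ⟨rfl, rfl⟩ := List.cons.inj hr'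
          exact Or.inr ⟨⟨(hp.trans List.perm_middle).cons_inv, hs', ht'⟩, rfl⟩
        · obtain ⟨rfl, rfl⟩ := List.cons.inj hr
          exact Or.inl ⟨⟨hp.cons_inv, hs', ht'⟩, rfl⟩
        · exact absurd ((List.cons.inj hr).1.trans (List.cons.inj hr').1.symm) hxy

lemma nodup_shuffles {u v : List α} (huv : (u ++ v).Nodup) : (shuffles u v).Nodup := by
  induction u, v using shuffles.induct with
  | case1 ys => simp [shuffles_nil_left]
  | case2 x xs => simp [shuffles_nil_right]
  | case3 x xs y ys ih₁ ih₂ =>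
    have hxy : x ≠ y := by
      rintro rfl
      simp at huv
    rw [shuffles, Multiset.nodup_add]
    refine ⟨(ih₁ (huv.sublist ((List.sublist_cons_self x xs).append_right _))).map
      List.cons_injective, (ih₂ (huv.sublist ((List.sublist_cons_self y ys).append_left _))).map
      List.cons_injective, ?_⟩
    simp only [Multiset.disjoint_left, Multiset.mem_map, not_exists, not_and]
    rintro _ ⟨w, -, rfl⟩ w' - h
    exact hxy (List.cons.inj h).1.symm

/-- `(a, false)` is the opener and `(a, true)` the closer of `a`. -/
def block (a : α) : List (α × Bool) := [(a, false), (a, true)]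

def IsBlockShuffle (l : List α) (w : List (α × Bool)) : Prop :=
  w.Perm (l.flatMap block) ∧ ∀ a ∈ l, (block a).Sublist w

def blockShuffles (l : List α) : Multiset (List (α × Bool)) :=
  multiShuffles (l.map block)

lemma nodup_flatMap_block {l : List α} (hl : l.Nodup) : (l.flatMap block).Nodup := by
  refine List.nodup_flatMap.mpr ⟨fun a _ => by simp [block], hl.imp fun hab => ?_⟩
  simp [Function.onFun, block, hab.symm]

lemma flatMap_block_injective : Function.Injective (List.flatMap (block : α → List (α × Bool)))
  | [], [], _ => rfl
  | [], _ :: _, h | _ :: _, [], h => by simp [block] at h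
  | a :: l, b :: l', h => by
    simp only [List.flatMap_cons, block, List.cons_append, List.nil_append, List.cons.injEq,
      Prod.mk.injEq, and_true] at h
    rw [h.1, flatMap_block_injective h.2.2]

namespace IsBlockShuffle

variable {l : List α} {w : List (α × Bool)}

lemma nodup (hl : l.Nodup) (h : IsBlockShuffle l w) : w.Nodup :=
  h.1.nodup_iff.mpr (nodup_flatMap_block hl)

lemma fst_mem (h : IsBlockShuffle l w) {p : α × Bool} (hp : p ∈ w) : p.1 ∈ l := by
  obtain ⟨b, hb, hpb⟩ := List.mem_flatMap.mp (h.1.mem_iff.mp hp)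
  simp only [block, List.mem_cons, List.not_mem_nil, or_false] at hpb
  rcases hpb with rfl | rfl <;> exact hb

end IsBlockShuffle

lemma isBlockShuffle_flatMap_block {l l' : List α} (h : l'.Perm l) :
    IsBlockShuffle l (l'.flatMap block) := by
  refine ⟨h.flatMap_right block, fun a ha => ?_⟩
  rw [List.flatMap_def]
  exact List.sublist_flatten_of_mem (List.mem_map_of_mem (h.mem_iff.mpr ha))

lemma IsBlockShuffle.filter_fst_ne [DecidableEq α] {l : List α} {w : List (α × Bool)}
    (h : IsBlockShuffle l w) {a : α} (ha : a ∉ l) : w.filter (fun p => p.1 ≠ a) = w :=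
  List.filter_eq_self.mpr fun _ hp => by simpa using ne_of_mem_of_not_mem (h.fst_mem hp) ha

lemma isBlockShuffle_nil_iff {w : List (α × Bool)} : IsBlockShuffle [] w ↔ w = [] := by
  simp [IsBlockShuffle]

lemma isBlockShuffle_cons_iff [DecidableEq α] {a : α} {l : List α} (hl : (a :: l).Nodup)
    {w : List (α × Bool)} :
    IsBlockShuffle (a :: l) w ↔ ∃ w', IsBlockShuffle l w' ∧
      w.Perm (block a ++ w') ∧ (block a).Sublist w ∧ w'.Sublist w := by
  have ha : a ∉ l := (List.nodup_cons.mp hl).1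
  constructor
  · rintro ⟨hp, hs⟩
    have hp' : (w.filter (fun p => p.1 ≠ a)).Perm (l.flatMap block) := by
      have := hp.filter (fun p => p.1 ≠ a)
      rw [List.flatMap_cons, List.filter_append,
        (isBlockShuffle_flatMap_block (List.Perm.refl l)).filter_fst_ne ha] at this
      simpa [block] using this
    refine ⟨w.filter (fun p => p.1 ≠ a), ⟨hp', fun b hb => ?_⟩,
      hp.trans (hp'.symm.append_left (block a)), hs a List.mem_cons_self, List.filter_sublist⟩
    simpa [block, ne_of_mem_of_not_mem hb ha] using
      (hs b (List.mem_cons_of_mem a hb)).filter (fun p => p.1 ≠ a)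
  · rintro ⟨w', ⟨hp', hs'⟩, hp, ha, hs⟩
    refine ⟨hp.trans (hp'.append_left _), ?_⟩
    rintro b (_ | ⟨_, hb⟩)
    exacts [ha, (hs' b hb).trans hs]

lemma IsBlockShuffle.nodup_block_append {a : α} {l : List α} (hl : (a :: l).Nodup)
    {w : List (α × Bool)} (h : IsBlockShuffle l w) : (block a ++ w).Nodup :=
  (h.1.append_left (block a)).nodup_iff.mpr (nodup_flatMap_block hl)

lemma mem_blockShuffles_iff [DecidableEq α] {l : List α} (hl : l.Nodup) {w : List (α × Bool)} :
    w ∈ blockShuffles l ↔ IsBlockShuffle l w := by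
  induction l generalizing w with
  | nil => simp [blockShuffles, multiShuffles, isBlockShuffle_nil_iff]
  | cons a l ih =>
    have hl' := (List.nodup_cons.mp hl).2
    change w ∈ (blockShuffles l).bind (shuffles (block a)) ↔ _
    rw [isBlockShuffle_cons_iff hl, Multiset.mem_bind]
    exact exists_congr fun w' => by
      rw [ih hl']
      exact and_congr_right fun hw' => mem_shuffles_iff (hw'.nodup_block_append hl)

lemma IsBlockShuffle.filter_eq_of_mem_shuffles [DecidableEq α] {a : α} {l : List α}
    (hl : (a :: l).Nodup) {w' w : List (α × Bool)} (h : IsBlockShuffle l w')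
    (hw : w ∈ shuffles (block a) w') : w.filter (fun p => p.1 ≠ a) = w' := by
  obtain ⟨hp, -, hs⟩ := (mem_shuffles_iff (h.nodup_block_append hl)).mp hw
  have hw' := h.filter_fst_ne (List.nodup_cons.mp hl).1
  have hp' : (w.filter (fun p => p.1 ≠ a)).Perm w' := by
    have := hp.filter (fun p => p.1 ≠ a)
    rwa [List.filter_append, hw', show (block a).filter (fun p => p.1 ≠ a) = [] by simp [block],
      List.nil_append] at this
  have hs' : w'.Sublist (w.filter (fun p => p.1 ≠ a)) := hw' ▸ hs.filter _
  exact (hs'.eq_of_length hp'.length_eq.symm).symm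

lemma nodup_blockShuffles [DecidableEq α] {l : List α} (hl : l.Nodup) :
    (blockShuffles l).Nodup := by
  induction l with
  | nil => simp [blockShuffles, multiShuffles]
  | cons a l ih =>
    have hl' := (List.nodup_cons.mp hl).2
    refine Multiset.nodup_bind.mpr ⟨fun w' hw' => nodup_shuffles
      (((mem_blockShuffles_iff hl').mp hw').nodup_block_append hl), (ih hl').pairwise ?_⟩
    intro w₁ hw₁ w₂ hw₂ hne
    rw [Function.onFun, Multiset.disjoint_left]
    intro w h₁ h₂
    exact hne <|
      (((mem_blockShuffles_iff hl').mp hw₁).filter_eq_of_mem_shuffles hl h₁).symm.trans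
      (((mem_blockShuffles_iff hl').mp hw₂).filter_eq_of_mem_shuffles hl h₂)

/-- Skips leading blocks; on an interleaving of blocks this finds the first two adjacent openers. -/
def firstOpenerPair : List (α × Bool) → Option (α × α)
  | (_, false) :: (_, true) :: r => firstOpenerPair r
  | (a, false) :: (b, false) :: _ => some (a, b)
  | (_, true) :: _ => none
  | [(_, false)] => none
  | [] => none

def swapFirstOpeners : List (α × Bool) → List (α × Bool)
  | (a, false) :: (b, true) :: r => (a, false) :: (b, true) :: swapFirstOpeners r
  | (a, false) :: (b, false) :: r => (b, false) :: (a, false) :: r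
  | (a, true) :: r => (a, true) :: r
  | [(a, false)] => [(a, false)]
  | [] => []

lemma swapFirstOpeners_involutive :
    Function.Involutive (swapFirstOpeners : List (α × Bool) → List (α × Bool)) := by
  intro w
  induction w using firstOpenerPair.induct <;> simp_all [swapFirstOpeners]

lemma firstOpenerPair_swapFirstOpeners (w : List (α × Bool)) :
    firstOpenerPair (swapFirstOpeners w) = (firstOpenerPair w).map Prod.swap := by
  induction w using firstOpenerPair.induct <;> simp_all [swapFirstOpeners, firstOpenerPair]

lemma firstOpenerPair_flatMap_block (l : List α) : firstOpenerPair (l.flatMap block) = none := by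
  induction l with
  | nil => rfl
  | cons a l ih => exact ih

lemma mem_of_firstOpenerPair_eq_some {w : List (α × Bool)} {a b : α}
    (h : firstOpenerPair w = some (a, b)) : (a, false) ∈ w ∧ (b, false) ∈ w := by
  induction w using firstOpenerPair.induct <;> simp_all [firstOpenerPair]

lemma ne_of_firstOpenerPair_eq_some {w : List (α × Bool)} {a b : α} (hw : w.Nodup)
    (h : firstOpenerPair w = some (a, b)) : a ≠ b := by
  induction w using firstOpenerPair.induct <;> simp_all [firstOpenerPair]

def label (f : α → α) (p : α × Bool) : α := if p.2 then p.1 else f p.1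

lemma map_label_block (f : α → α) (a : α) : (block a).map (label f) = [f a, a] := rfl

lemma shProd_map_single_pair (f : α → α) (l : List α) :
    shProd (l.map fun i => Finsupp.single [f i, i] 1) =
      ofMS ((blockShuffles l).map (List.map (label f))) := by
  have : (l.map fun i => Finsupp.single [f i, i] 1) =
      ((l.map block).map (List.map (label f))).map fun w => Finsupp.single w (1 : ℝ) := by
    simp only [List.map_map, Function.comp_def, map_label_block]
  rw [this, shProd_map_single, multiShuffles_map, blockShuffles]

lemma map_label_swapFirstOpeners [DecidableEq α] (f : α → α) {w : List (α × Bool)} {a b : α}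
    (hw : w.Nodup) (h : firstOpenerPair w = some (a, b)) :
    (swapFirstOpeners w).map (label (f ∘ Equiv.swap a b)) = w.map (label f) := by
  induction w using firstOpenerPair.induct with
  | case1 x y r ih =>
    simp only [firstOpenerPair] at h
    have := mem_of_firstOpenerPair_eq_some h
    simp only [List.nodup_cons, List.mem_cons] at hw
    have hxa : x ≠ a := by rintro rfl; exact hw.1 (Or.inr this.1)
    have hxb : x ≠ b := by rintro rfl; exact hw.1 (Or.inr this.2)
    simp [swapFirstOpeners, label, ih hw.2.2 h, Equiv.swap_apply_of_ne_of_ne hxa hxb]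
  | case2 x y r =>
    simp only [firstOpenerPair, Option.some.injEq, Prod.mk.injEq] at h
    obtain ⟨rfl, rfl⟩ := h
    simp only [List.nodup_cons, List.mem_cons] at hw
    simp only [swapFirstOpeners, List.map_cons, label, Function.comp_apply, Equiv.swap_apply_left,
      Equiv.swap_apply_right, Bool.false_eq_true, if_false, List.cons.injEq, true_and]
    refine List.map_congr_left fun ⟨c, t⟩ hc => ?_
    cases t
    · have hcx : c ≠ x := by rintro rfl; exact hw.1 (Or.inr hc)
      have hcy : c ≠ y := by rintro rfl; exact hw.2.1 hc
      simp [label, Equiv.swap_apply_of_ne_of_ne hcx hcy]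
    · rfl
  | _ => simp [firstOpenerPair] at h

lemma block_sublist_swap {c x y : α} {r : List (α × Bool)}
    (h : (block c).Sublist ((x, false) :: (y, false) :: r)) :
    (block c).Sublist ((y, false) :: (x, false) :: r) := by
  simp only [block, List.sublist_cons_iff, List.cons.injEq, Prod.mk.injEq] at h ⊢
  grind

lemma not_block_sublist_closer_cons {c : α} {r : List (α × Bool)}
    (hr : ((c, true) :: r).Nodup) : ¬ (block c).Sublist ((c, true) :: r) := by
  intro h
  rcases List.sublist_cons_iff.mp h with h | ⟨r', hr', -⟩
  · exact (List.nodup_cons.mp hr).1 (h.subset (by simp [block]))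
  · simp [block] at hr'

namespace IsBlockShuffle

variable {l : List α} {r : List (α × Bool)}

lemma not_closer_cons (hl : l.Nodup) {c : α} : ¬ IsBlockShuffle l ((c, true) :: r) := fun h =>
  not_block_sublist_closer_cons (h.nodup hl) (h.2 c (h.fst_mem List.mem_cons_self))

lemma not_singleton {c : α} : ¬ IsBlockShuffle l [(c, false)] := fun h => by
  simpa [block] using (h.2 c (h.fst_mem List.mem_cons_self)).length_le

lemma eq_of_opener_closer (hl : l.Nodup) {a b : α}
    (h : IsBlockShuffle l ((a, false) :: (b, true) :: r)) : b = a := by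
  by_contra hba
  have hb := h.2 b (h.fst_mem (p := (b, true)) (by simp))
  refine not_block_sublist_closer_cons ((h.nodup hl).sublist (List.sublist_cons_self _ _)) ?_
  simp only [block, List.sublist_cons_iff, List.cons.injEq, Prod.mk.injEq] at hb ⊢
  grind

lemma swap_openers {a b : α} (h : IsBlockShuffle l ((a, false) :: (b, false) :: r)) :
    IsBlockShuffle l ((b, false) :: (a, false) :: r) :=
  ⟨(List.Perm.swap _ _ _).trans h.1, fun c hc => block_sublist_swap (h.2 c hc)⟩

end IsBlockShuffle

lemma isBlockShuffle_block_append_iff [DecidableEq α] {l : List α} (hl : l.Nodup) {a : α}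
    {r : List (α × Bool)} :
    IsBlockShuffle l (block a ++ r) ↔ a ∈ l ∧ IsBlockShuffle (l.erase a) r := by
  constructor
  · intro h
    have ha : a ∈ l := h.fst_mem (p := (a, false)) (by simp [block])
    have hp := h.1.trans ((List.perm_cons_erase ha).flatMap_right block)
    refine ⟨ha, (List.perm_append_left_iff _).mp hp, fun b hb => ?_⟩
    have hba : b ≠ a := ((hl.mem_erase_iff).mp hb).1
    have := h.2 b ((hl.mem_erase_iff).mp hb).2
    simp only [block, List.sublist_cons_iff, List.cons.injEq, Prod.mk.injEq, List.cons_append,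
      List.nil_append] at this ⊢
    grind
  · rintro ⟨ha, hp, hs⟩
    refine ⟨(hp.append_left (block a)).trans ((List.perm_cons_erase ha).flatMap_right block).symm,
      fun b hb => ?_⟩
    by_cases hba : b = a
    · exact hba ▸ List.sublist_append_left _ _
    · exact (hs b ((List.mem_erase_of_ne hba).mpr hb)).trans (List.sublist_append_right _ _)

namespace IsBlockShuffle

variable [DecidableEq α]

lemma swapFirstOpeners {l : List α} (hl : l.Nodup) {w : List (α × Bool)}
    (h : IsBlockShuffle l w) : IsBlockShuffle l (swapFirstOpeners w) := by
  induction w using firstOpenerPair.induct generalizing l with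
  | case1 x y r ih =>
    obtain rfl : x = y := (h.eq_of_opener_closer hl).symm
    obtain ⟨hx, hr⟩ := (isBlockShuffle_block_append_iff hl).mp h
    exact (isBlockShuffle_block_append_iff hl).mpr ⟨hx, ih (hl.erase x) hr⟩
  | case2 x y r => exact h.swap_openers
  | _ => simpa [ShufflePaper.swapFirstOpeners] using h

lemma exists_perm_eq_flatMap {l : List α} (hl : l.Nodup) {w : List (α × Bool)}
    (h : IsBlockShuffle l w) (hw : firstOpenerPair w = none) :
    ∃ l' : List α, l'.Perm l ∧ w = l'.flatMap block := by
  induction w using firstOpenerPair.induct generalizing l with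
  | case1 x y r ih =>
    obtain rfl : x = y := (h.eq_of_opener_closer hl).symm
    obtain ⟨hx, hr⟩ := (isBlockShuffle_block_append_iff hl).mp h
    obtain ⟨l', hp, rfl⟩ := ih (hl.erase x) hr hw
    exact ⟨x :: l', (hp.cons x).trans (List.perm_cons_erase hx).symm, rfl⟩
  | case2 x y r => simp [firstOpenerPair] at hw
  | case3 x r => exact absurd h (not_closer_cons hl)
  | case4 x => exact absurd h not_singleton
  | case5 =>
    have : l = [] := by
      simpa [block, List.flatMap_eq_nil_iff, ← List.eq_nil_iff_forall_not_mem] using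
        List.nil_perm.mp h.1
    exact ⟨[], this ▸ List.Perm.refl _, rfl⟩

end IsBlockShuffle

lemma filter_blockShuffles_firstOpenerPair_eq_none [DecidableEq α] {l : List α} (hl : l.Nodup) :
    (blockShuffles l).filter (fun w => firstOpenerPair w = none) =
      (l.permutations : Multiset (List α)).map (List.flatMap block) := by
  refine (Multiset.Nodup.ext ((nodup_blockShuffles hl).filter _)
    ((Multiset.coe_nodup.mpr (List.nodup_permutations l hl)).map flatMap_block_injective)).mpr
    fun w => ?_
  simp only [Multiset.mem_filter, mem_blockShuffles_iff hl, Multiset.mem_map, Multiset.mem_coe,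
    List.mem_permutations]
  constructor
  · rintro ⟨h, hw⟩
    obtain ⟨l', hp, rfl⟩ := h.exists_perm_eq_flatMap hl hw
    exact ⟨l', hp, rfl⟩
  · rintro ⟨l', hp, rfl⟩
    exact ⟨isBlockShuffle_flatMap_block hp, firstOpenerPair_flatMap_block l'⟩

section Alternant

variable [Fintype α] [DecidableEq α]

noncomputable def alternant (w : List (α × Bool)) : List α →₀ ℝ :=
  ∑ σ : Equiv.Perm α, (Equiv.Perm.sign σ : ℤ) • Finsupp.single (w.map (label σ)) 1

lemma alternant_swapFirstOpeners {w : List (α × Bool)} {a b : α} (hw : w.Nodup)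
    (h : firstOpenerPair w = some (a, b)) :
    alternant (swapFirstOpeners w) = -alternant w := by
  rw [alternant, ← Equiv.sum_comp (Equiv.mulRight (Equiv.swap a b)), alternant,
    ← Finset.sum_neg_distrib]
  refine Finset.sum_congr rfl fun σ _ => ?_
  rw [Equiv.coe_mulRight, Equiv.Perm.coe_mul, map_label_swapFirstOpeners _ hw h,
    Equiv.Perm.sign_mul, Equiv.Perm.sign_swap (ne_of_firstOpenerPair_eq_some hw h)]
  simp

lemma sum_alternant_filter_firstOpenerPair_ne_none {l : List α} (hl : l.Nodup) :
    (((blockShuffles l).filter fun w => firstOpenerPair w ≠ none).map alternant).sum = 0 := by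
  rw [← Finset.sum_mk _ ((nodup_blockShuffles hl).filter _)]
  refine Finset.sum_involution (fun w _ => swapFirstOpeners w) (fun w hw => ?_)
    (fun w hw _ => ?_) (fun w hw => ?_) (fun w _ => swapFirstOpeners_involutive w)
  all_goals
    obtain ⟨hw, hne⟩ := Multiset.mem_filter.mp (Finset.mem_mk.mp hw)
    obtain ⟨⟨a, b⟩, hab⟩ := Option.ne_none_iff_exists'.mp hne
    have hnd := ((mem_blockShuffles_iff hl).mp hw).nodup hl
  · rw [alternant_swapFirstOpeners hnd hab, add_neg_cancel]
  · intro heq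
    have := firstOpenerPair_swapFirstOpeners w
    rw [heq, hab, Option.map_some, Option.some.injEq, Prod.swap_prod_mk, Prod.mk.injEq] at this
    exact ne_of_firstOpenerPair_eq_some hnd hab this.1
  · refine Finset.mem_mk.mpr (Multiset.mem_filter.mpr ⟨(mem_blockShuffles_iff hl).mpr
      (((mem_blockShuffles_iff hl).mp hw).swapFirstOpeners hl), ?_⟩)
    simp [firstOpenerPair_swapFirstOpeners, hab]

theorem sum_alternant_blockShuffles {l : List α} (hl : l.Nodup) :
    ((blockShuffles l).map alternant).sum =
      ((l.permutations : Multiset (List α)).map fun l' => alternant (l'.flatMap block)).sum := by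
  rw [← Multiset.filter_add_not (fun w => firstOpenerPair w = none) (blockShuffles l),
    Multiset.map_add, Multiset.sum_add, sum_alternant_filter_firstOpenerPair_ne_none hl, add_zero,
    filter_blockShuffles_firstOpenerPair_eq_none hl, Multiset.map_map, Function.comp_def]

lemma sum_map_alternant (M : Multiset (List (α × Bool))) :
    (M.map alternant).sum =
      ∑ σ : Equiv.Perm α, (Equiv.Perm.sign σ : ℤ) • ofMS (M.map (List.map (label σ))) := by
  simp only [ofMS_map, Multiset.smul_sum, Multiset.map_map, Function.comp_def]
  rw [← Multiset.sum_map_sum]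
  rfl

end Alternant

lemma detSh_W (d : ℕ) : detSh (W d) = ((blockShuffles (List.finRange d)).map alternant).sum := by
  rw [sum_map_alternant]
  simp only [detSh, W, shProd_map_single_pair]

lemma sum_alternant_flatMap_block_map [Fintype α] [DecidableEq α] (l : List α) :
    ∑ τ : Equiv.Perm α, alternant ((l.map τ).flatMap block) =
      ∑ σ : Equiv.Perm α, (Equiv.Perm.sign σ : ℤ) • ∑ τ : Equiv.Perm α,
        Finsupp.single (l.flatMap fun i => [τ i, σ (τ i)]) (1 : ℝ) := by
  simp only [alternant, List.map_flatMap, List.flatMap_map, map_label_block]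
  rw [Finset.sum_comm]
  refine Fintype.sum_equiv (Equiv.inv _) _ _ fun σ => ?_
  rw [Equiv.inv_apply, Equiv.Perm.sign_inv, Finset.smul_sum]
  refine Fintype.sum_equiv (Equiv.mulLeft σ) _ _ fun τ => ?_
  simp

lemma exists_map_finRange_eq_of_perm {d : ℕ} {l : List (Fin d)} (hl : l.Perm (List.finRange d)) :
    ∃ τ : Equiv.Perm (Fin d), (List.finRange d).map τ = l := by
  have hlen : l.length = d := by simpa using hl.length_eq
  have hinj : Function.Injective fun k : Fin d => l.get (k.cast hlen.symm) := fun i j h =>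
    Fin.cast_injective _ ((hl.nodup_iff.mpr (List.nodup_finRange d)).get_inj_iff.mp h)
  refine ⟨Equiv.ofBijective _ (Finite.injective_iff_bijective.mp hinj), ?_⟩
  rw [Equiv.coe_ofBijective, ← List.ofFn_eq_map, ← List.ofFn_congr hlen, List.ofFn_get]

lemma map_univ_map_finRange (d : ℕ) :
    (Finset.univ : Finset (Equiv.Perm (Fin d))).val.map
        (fun τ : Equiv.Perm (Fin d) => (List.finRange d).map τ) =
      ((List.finRange d).permutations : Multiset (List (Fin d))) := by
  refine (Multiset.Nodup.ext (Finset.univ.nodup.map fun τ₁ τ₂ h => Equiv.ext fun i =>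
    List.map_inj_left.mp h i (List.mem_finRange i))
    (Multiset.coe_nodup.mpr (List.nodup_permutations _ (List.nodup_finRange d)))).mpr fun l => ?_
  simp only [Multiset.mem_map, Finset.mem_val, Finset.mem_univ, true_and, Multiset.mem_coe,
    List.mem_permutations]
  exact ⟨fun ⟨τ, h⟩ => h ▸ Equiv.Perm.map_finRange_perm τ, exists_map_finRange_eq_of_perm⟩

theorem shuffle_det_W_eq_block_sum_general (d : ℕ) :
    detSh (W d) =
      ∑ σ : Equiv.Perm (Fin d), (Equiv.Perm.sign σ : ℤ) •
        ∑ τ : Equiv.Perm (Fin d),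
          Finsupp.single ((List.finRange d).flatMap fun i => [τ i, σ (τ i)])
            (1 : ℝ) := by
  rw [detSh_W, sum_alternant_blockShuffles (List.nodup_finRange d), ← map_univ_map_finRange,
    Multiset.map_map, ← sum_alternant_flatMap_block_map]
  rfl

/-- the shuffle determinant of `W_d` as a signed sum of
concatenations of two-letter blocks `τ(i)σ(τ(i))`. -/
theorem shuffle_det_W_eq_block_sum (d : ℕ) (hd : 1 ≤ d) :
    detSh (W d) =
      ∑ σ : Equiv.Perm (Fin d), (Equiv.Perm.sign σ : ℤ) •
        ∑ τ : Equiv.Perm (Fin d),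
          Finsupp.single ((List.finRange d).flatMap fun i => [τ i, σ (τ i)])
            (1 : ℝ) :=
  shuffle_det_W_eq_block_sum_general d

end ShufflePaper
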